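/- Let H1 be a hypergraph, let C_p be an [M_p]-component of H1, let M_r ⊆ Fr(C_p), let C_r be an [M_r]-component of H1 such that C_p ∪ C_r is [M_p ∩ M_r]-connected, and let M_s ⊆ Fr(C_r). Define ED = (M_r ∩ Fr(C_r)) \ M_s, set M_r' = M_r \ ED, and let C_r' be the [M_r']-component of H1 containing C_r ∪ ED. Then: (a) every [M_r]-component C of H1 such that C_p ∪ C is [M_p ∩ M_r]-connected either satisfies C ⊆ C_r' or is an [M_r']-component such that C_p ∪ C is [M_p ∩ M_r']-connected; (b) every [M_r']-component C' ≠ C_r' of H1 such that C_p ∪ C' is [M_p ∩ M_r']-connected is an [M_r]-component such that C_p ∪ C' is [M_p ∩ M_r]-connected. -/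

import Mathlib

/-! Common definitions: hypergraphs, components, the Robber and Captain game,
the Robber and Marshal game, tree projections, (generalized) hypertree decompositions. -/

variable {α : Type} [DecidableEq α]

/-- A hypergraph: a finite set of nodes and a finite set of hyperedges, each a subset of the
nodes, such that every node occurs in some hyperedge. -/
structure FinHypergraph (α : Type) [DecidableEq α] where
  nodes : Finset α
  edges : Finset (Finset α)
  edge_sub : ∀ h ∈ edges, h ⊆ nodes
  cover : ∀ x ∈ nodes, ∃ h ∈ edges, x ∈ h

namespace FinHypergraph

/-- `X` and `Y` are `[M]`-adjacent: some hyperedge `h` satisfies `{X,Y} ⊆ h \ M`. -/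
def MAdj (H : FinHypergraph α) (M : Finset α) (X Y : α) : Prop :=
  ∃ h ∈ H.edges, X ∈ h ∧ Y ∈ h ∧ X ∉ M ∧ Y ∉ M

/-- An `[M]`-path: a sequence of consecutively `[M]`-adjacent nodes. -/
def MPath (H : FinHypergraph α) (M : Finset α) : α → α → Prop :=
  Relation.ReflTransGen (H.MAdj M)

/-- `W` is `[M]`-connected: every two nodes of `W` are joined by an `[M]`-path. -/
def MConn (H : FinHypergraph α) (M W : Finset α) : Prop :=
  ∀ X ∈ W, ∀ Y ∈ W, H.MPath M X Y

/-- `C` is an `[M]`-component: a maximal `[M]`-connected nonempty subset of `nodes(H) \ M`. -/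
def MComp (H : FinHypergraph α) (M C : Finset α) : Prop :=
  C.Nonempty ∧ C ⊆ H.nodes \ M ∧ H.MConn M C ∧
    ∀ C' : Finset α, C ⊆ C' → C' ⊆ H.nodes \ M → H.MConn M C' → C' = C

/-- The frontier `Fr(C)`: the union of all hyperedges of `H` meeting `C`. -/
def Fr (H : FinHypergraph α) (C : Finset α) : Finset α :=
  (H.edges.filter fun h => (h ∩ C).Nonempty).sup id

/-- The border `∂C = Fr(C) \ C`. -/
def border (H : FinHypergraph α) (C : Finset α) : Finset α := H.Fr C \ C

/-- `H1 ≤ H2`: every hyperedge of `H1` is contained in some hyperedge of `H2`. -/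
def HLE (H1 H2 : FinHypergraph α) : Prop := ∀ h ∈ H1.edges, ∃ h' ∈ H2.edges, h ⊆ h'

/-- `H` is acyclic iff it has a join tree: a tree on the hyperedges of `H` such that, for every
node `X`, the set of hyperedges containing `X` induces a connected subtree. -/
def IsAcyclicHG (H : FinHypergraph α) : Prop :=
  ∃ T : SimpleGraph {h : Finset α // h ∈ H.edges},
    T.IsTree ∧ ∀ X ∈ H.nodes,
      (T.induce {e : {h : Finset α // h ∈ H.edges} | X ∈ e.1}).Connected

/-- `H^k`: the hypergraph over the same nodes whose hyperedges are all unions of at most `k`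
(and at least one) hyperedges of `H`. -/
def pow (H : FinHypergraph α) (k : ℕ) (hk : 1 ≤ k) : FinHypergraph α where
  nodes := H.nodes
  edges := (H.edges.powerset.filter fun S => S.Nonempty ∧ S.card ≤ k).image fun S => S.sup id
  edge_sub := by
    intro h hh
    simp only [Finset.mem_image, Finset.mem_filter, Finset.mem_powerset] at hh
    obtain ⟨S, ⟨hS, _, _⟩, rfl⟩ := hh
    exact Finset.sup_le fun i hi => H.edge_sub i (hS hi)
  cover := by
    intro x hx
    obtain ⟨h, hh, hxh⟩ := H.cover x hx
    refine ⟨h, ?_, hxh⟩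
    simp only [Finset.mem_image, Finset.mem_filter, Finset.mem_powerset]
    exact ⟨{h}, ⟨Finset.singleton_subset_iff.mpr hh, Finset.singleton_nonempty h,
      by simpa using hk⟩, by simp⟩

/-- The simplicial version of `H`: same nodes, and hyperedges all nonempty subsets of
hyperedges of `H`. -/
def simplicial (H : FinHypergraph α) : FinHypergraph α where
  nodes := H.nodes
  edges := (H.edges.biUnion Finset.powerset).filter fun s => s.Nonempty
  edge_sub := by
    intro h hh
    simp only [Finset.mem_filter, Finset.mem_biUnion, Finset.mem_powerset] at hh
    obtain ⟨⟨e, he, hsub⟩, -⟩ := hh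
    exact hsub.trans (H.edge_sub e he)
  cover := by
    intro x hx
    obtain ⟨h, hh, hxh⟩ := H.cover x hx
    refine ⟨h, ?_, hxh⟩
    simp only [Finset.mem_filter, Finset.mem_biUnion, Finset.mem_powerset]
    exact ⟨⟨h, hh, le_refl _⟩, ⟨x, hxh⟩⟩

end FinHypergraph

/-- A tree projection of `H1` with respect to `H2`: an acyclic hypergraph `Ha` over the nodes
of `H1` with `H1 ≤ Ha ≤ H2`. -/
def IsTreeProjection (Ha H1 H2 : FinHypergraph α) : Prop :=
  Ha.nodes = H1.nodes ∧ Ha.IsAcyclicHG ∧ FinHypergraph.HLE H1 Ha ∧ FinHypergraph.HLE Ha H2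

def HasTreeProjection (H1 H2 : FinHypergraph α) : Prop := ∃ Ha, IsTreeProjection Ha H1 H2

/-! ### The Robber and Captain game -/

/-- A configuration `(h, M, C)`. -/
abbrev Config (α : Type) := Finset α × Finset α × Finset α

/-- The initial configuration `(∅, ∅, nodes(H1))`. -/
def initConfig (H1 : FinHypergraph α) : Config α := (∅, ∅, H1.nodes)

/-- `Cr` is a `[v, Mr]`-option: an `[Mr]`-component `Cr` of `H1` such that `C ∪ Cr` is
`[M ∩ Mr]`-connected, where `v = (h, M, C)`. -/
def IsOption (H1 : FinHypergraph α) (v : Config α) (Mr Cr : Finset α) : Prop :=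
  H1.MComp Mr Cr ∧ H1.MConn (v.2.1 ∩ Mr) (v.2.2 ∪ Cr)

/-- The successor relation of the strategy graph (arcs from a configuration in the domain to the
configurations resulting from the Captain's move and the Robber's choice of an option). -/
def StratSucc (H1 : FinHypergraph α) (dom : Set (Config α))
    (mv : Config α → Finset α × Finset α) (a b : Config α) : Prop :=
  a ∈ dom ∧ b.1 = (mv a).1 ∧ b.2.1 = (mv a).2 ∧ IsOption H1 a (mv a).2 b.2.2

/-- A strategy for the Captain in the Robber and Captain game on `(H1, H2)`. -/
structure Strategy (H1 H2 : FinHypergraph α) where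
  dom : Set (Config α)
  move : Config α → Finset α × Finset α
  init_mem : initConfig H1 ∈ dom
  valid : ∀ v ∈ dom, v = initConfig H1 ∨
    (v.1 ∈ H2.edges ∧ v.2.1 ⊆ v.1 ∧ H1.MComp v.2.1 v.2.2)
  move_edge : ∀ v ∈ dom, (move v).1 ∈ H2.edges
  move_sub : ∀ v ∈ dom, (move v).2 ⊆ (move v).1 ∩ H1.Fr v.2.2
  closed : ∀ v ∈ dom, ∀ Cr : Finset α,
    IsOption H1 v (move v).2 Cr → ((move v).1, (move v).2, Cr) ∈ dom
  reach : ∀ v ∈ dom, Relation.ReflTransGen (StratSucc H1 dom move) (initConfig H1) v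

namespace Strategy

variable {H1 H2 : FinHypergraph α}

/-- The arc relation of the strategy graph `G(σ)`. -/
def Succ (σ : Strategy H1 H2) : Config α → Config α → Prop :=
  StratSucc H1 σ.dom σ.move

/-- `σ` is winning iff its strategy graph is acyclic. -/
def Winning (σ : Strategy H1 H2) : Prop :=
  ∀ v : Config α, ¬ Relation.TransGen σ.Succ v v

/-- `σ` is monotone: every move is monotone, i.e. every option shrinks the component. -/
def IsMonotone (σ : Strategy H1 H2) : Prop :=
  ∀ v ∈ σ.dom, ∀ Cr : Finset α, IsOption H1 v (σ.move v).2 Cr → Cr ⊆ v.2.2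

/-- `σ` is greedy: at `v = (h_p, M_p, C_p)` the move `(h_r, M_r)` satisfies
`M_r = h_r ∩ Fr(C_p)`, with `h_r = h_p` whenever `h_p ∩ C_p ≠ ∅` (otherwise `h_r` is an
arbitrary hyperedge of `H2`, which is guaranteed by `move_edge`). -/
def Greedy (σ : Strategy H1 H2) : Prop :=
  ∀ v ∈ σ.dom, (σ.move v).2 = (σ.move v).1 ∩ H1.Fr v.2.2 ∧
    ((v.1 ∩ v.2.2).Nonempty → (σ.move v).1 = v.1)

/-- `σ` is nice: `σ(h_p, M_p, C_p) = (h_p, ∂C_p)` whenever `∂C_p ⊂ M_p`. -/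
def Nice (σ : Strategy H1 H2) : Prop :=
  ∀ v ∈ σ.dom, H1.border v.2.2 ⊂ v.2.1 → σ.move v = (v.1, H1.border v.2.2)

end Strategy

/-! ### The Robber and Marshal game -/

/-- A configuration `(h, C)` of the Robber and Marshal game. -/
abbrev MConfig (α : Type) := Finset α × Finset α

/-- The Robber's options in the Robber and Marshal game: `Cr` is an `[hr]`-component such that
`C ∪ Cr` is `[h ∩ hr]`-connected, where `v = (h, C)`. -/
def MarshalOption (H1 : FinHypergraph α) (v : MConfig α) (hr Cr : Finset α) : Prop :=
  H1.MComp hr Cr ∧ H1.MConn (v.1 ∩ hr) (v.2 ∪ Cr)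

/-- The successor relation of the Robber and Marshal game under a given Marshal strategy. -/
def MarSucc (H1 : FinHypergraph α) (dom : Set (MConfig α)) (mv : MConfig α → Finset α)
    (a b : MConfig α) : Prop :=
  a ∈ dom ∧ ¬ a.2 ⊆ a.1 ∧ b.1 = mv a ∧
    (MarshalOption H1 a (mv a) b.2 ∨
      ((¬ ∃ Cr : Finset α, MarshalOption H1 a (mv a) Cr) ∧ b.2 = ∅))

/-- A strategy for the Marshal in the Robber and Marshal game on `(H1, H2)`.
A configuration `(h, C)` with `C ⊆ h` is a capture configuration; at any other configuration of
the domain the Marshal moves to a hyperedge of `H2`. -/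
structure MarshalStrategy (H1 H2 : FinHypergraph α) where
  dom : Set (MConfig α)
  move : MConfig α → Finset α
  init_mem : (∅, H1.nodes) ∈ dom
  valid : ∀ v ∈ dom, v = ((∅ : Finset α), H1.nodes) ∨
    (v.1 ∈ H2.edges ∧ (H1.MComp v.1 v.2 ∨ v.2 = ∅))
  move_edge : ∀ v ∈ dom, ¬ v.2 ⊆ v.1 → move v ∈ H2.edges
  closed : ∀ v ∈ dom, ¬ v.2 ⊆ v.1 → ∀ Cr : Finset α,
    MarshalOption H1 v (move v) Cr → (move v, Cr) ∈ dom
  closed_cap : ∀ v ∈ dom, ¬ v.2 ⊆ v.1 →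
    (¬ ∃ Cr : Finset α, MarshalOption H1 v (move v) Cr) → ((move v, ∅) : MConfig α) ∈ dom
  reach : ∀ v ∈ dom,
    Relation.ReflTransGen (MarSucc H1 dom move) ((∅ : Finset α), H1.nodes) v

namespace MarshalStrategy

variable {H1 H2 : FinHypergraph α}

/-- The Marshal wins: starting from the initial configuration the game always ends in a capture
configuration; equivalently, the game graph of the strategy is acyclic. -/
def Winning (μ : MarshalStrategy H1 H2) : Prop :=
  ∀ v : MConfig α, ¬ Relation.TransGen (MarSucc H1 μ.dom μ.move) v v

/-- The Marshal strategy is monotone: in every move, every available component shrinks. -/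
def IsMonotone (μ : MarshalStrategy H1 H2) : Prop :=
  ∀ v ∈ μ.dom, ¬ v.2 ⊆ v.1 → ∀ Cr : Finset α, MarshalOption H1 v (μ.move v) Cr → Cr ⊆ v.2

end MarshalStrategy

/-! ### Rooted trees and (generalized) hypertree decompositions -/

/-- A finite rooted tree, encoded by a parent function on `Fin (size+1)`. -/
structure RTree where
  size : ℕ
  parent : Fin (size + 1) → Fin (size + 1)
  root : Fin (size + 1)
  parent_root : parent root = root
  reach_root : ∀ v, ∃ m : ℕ, parent^[m] v = root

namespace RTree

/-- Adjacency in the rooted tree. -/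
def Adj (T : RTree) (a b : Fin (T.size + 1)) : Prop :=
  a ≠ b ∧ (T.parent a = b ∨ T.parent b = a)

/-- A set of vertices induces a connected subtree. -/
def ConnIn (T : RTree) (S : Set (Fin (T.size + 1))) : Prop :=
  ∀ a ∈ S, ∀ b ∈ S,
    Relation.ReflTransGen (fun x y => T.Adj x y ∧ x ∈ S ∧ y ∈ S) a b

/-- `q` is a vertex of the subtree rooted at `p` (i.e. a descendant of `p`). -/
def Desc (T : RTree) (p q : Fin (T.size + 1)) : Prop :=
  ∃ m : ℕ, T.parent^[m] q = p

end RTree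

/-- A generalized hypertree decomposition of `H`. -/
structure GHDec (H : FinHypergraph α) where
  T : RTree
  chi : Fin (T.size + 1) → Finset α
  lam : Fin (T.size + 1) → Finset (Finset α)
  chi_sub : ∀ p, chi p ⊆ H.nodes
  lam_sub : ∀ p, lam p ⊆ H.edges
  edge_cover : ∀ h ∈ H.edges, ∃ p, h ⊆ chi p
  conn : ∀ Y ∈ H.nodes, T.ConnIn {p | Y ∈ chi p}
  chi_cov : ∀ p, chi p ⊆ (lam p).sup id

namespace GHDec

variable {H : FinHypergraph α}

/-- The decomposition has width at most `k`. -/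
def WidthLE (D : GHDec H) (k : ℕ) : Prop := ∀ p, (D.lam p).card ≤ k

/-- Condition (4) of hypertree decompositions: for every vertex `p`, the intersection of
`⋃ λ(p)` with `⋃_{q in the subtree rooted at p} χ(q)` is contained in `χ(p)`. -/
def IsHD (D : GHDec H) : Prop :=
  ∀ p, ∀ x ∈ (D.lam p).sup id, (∃ q, D.T.Desc p q ∧ x ∈ D.chi q) → x ∈ D.chi p

end GHDec

/-!
Deleting `ED ⊆ Cr'` from the separator `Mr` can only merge `[Mr]`-components into `Cr'`: an
`[Mr']`-component other than `Cr'` avoids `Mr \ Mr' ⊆ Cr'`, so it is already an `[Mr]`-component,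
and an `[Mr]`-component is either swallowed by `Cr'` or survives unchanged. For connectivity with
`Cp`, walk an `[Mp ∩ Mr']`-path from `Cp` to `C'` backwards from `C'`: it stays in `C'` until it
reaches a node `z ∈ Mr`. Such a `z` is not in `Mp`, since otherwise `z ∈ ED ⊆ Cr'` would drag `C'`
into `Cr'`; so `z ∈ Fr(Cp) \ Mp` is `[Mp ∩ Mr]`-adjacent both to `Cp` and to `C'`.
-/

namespace FinHypergraph

variable {H : FinHypergraph α} {M M' A B C D D₀ : Finset α} {X Y : α}

lemma mem_Fr : X ∈ H.Fr C ↔ ∃ e ∈ H.edges, X ∈ e ∧ (e ∩ C).Nonempty := by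
  simp only [Fr, Finset.mem_sup, Finset.mem_filter, id_eq]
  exact ⟨fun ⟨e, ⟨he, hC⟩, hX⟩ => ⟨e, he, hX, hC⟩, fun ⟨e, he, hX, hC⟩ => ⟨e, ⟨he, hC⟩, hX⟩⟩

lemma MAdj.symm (h : H.MAdj M X Y) : H.MAdj M Y X :=
  let ⟨e, he, hX, hY, hXM, hYM⟩ := h
  ⟨e, he, hY, hX, hYM, hXM⟩

lemma MAdj.left_notMem (h : H.MAdj M X Y) : X ∉ M :=
  let ⟨_, _, _, _, hX, _⟩ := h
  hX

lemma MAdj.right_notMem (h : H.MAdj M X Y) : Y ∉ M :=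
  let ⟨_, _, _, _, _, hY⟩ := h
  hY

lemma MAdj.of_notMem (h : H.MAdj M' X Y) (hX : X ∉ M) (hY : Y ∉ M) : H.MAdj M X Y :=
  let ⟨e, he, hXe, hYe, _, _⟩ := h
  ⟨e, he, hXe, hYe, hX, hY⟩

lemma MAdj.anti (h : H.MAdj M X Y) (hM : M' ⊆ M) : H.MAdj M' X Y :=
  h.of_notMem (fun hX => h.left_notMem (hM hX)) (fun hY => h.right_notMem (hM hY))

lemma MPath.symm (h : H.MPath M X Y) : H.MPath M Y X := by
  induction h with
  | refl => exact .refl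
  | tail _ hZY ih => exact ih.head hZY.symm

lemma MPath.anti (h : H.MPath M X Y) (hM : M' ⊆ M) : H.MPath M' X Y :=
  Relation.ReflTransGen.mono (r := H.MAdj M) (fun _ _ h => h.anti hM) X Y h

lemma MPath.notMem (h : H.MPath M X Y) (hX : X ∉ M) : Y ∉ M := by
  induction h with
  | refl => exact hX
  | tail _ hZY _ => exact hZY.right_notMem

lemma MConn.anti (h : H.MConn M A) (hM : M' ⊆ M) : H.MConn M' A :=
  fun X hX Y hY => (h X hX Y hY).anti hM

lemma MConn.singleton : H.MConn M {X} := by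
  intro Y hY Z hZ
  rw [Finset.mem_singleton.1 hY, Finset.mem_singleton.1 hZ]
  exact .refl

lemma MConn.union (hA : H.MConn M A) (hB : H.MConn M B) (hX : X ∈ A) (hY : Y ∈ B)
    (hXY : H.MPath M X Y) : H.MConn M (A ∪ B) := by
  have toY : ∀ Z ∈ A ∪ B, H.MPath M Z Y := by
    intro Z hZ
    rcases Finset.mem_union.1 hZ with hZ | hZ
    · exact (hA Z hZ X hX).trans hXY
    · exact hB Z hZ Y hY
  exact fun Z hZ W hW => (toY Z hZ).trans (toY W hW).symm

lemma MComp.mem_nodes (hC : H.MComp M C) (hX : X ∈ C) : X ∈ H.nodes :=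
  (Finset.mem_sdiff.1 (hC.2.1 hX)).1

lemma MComp.notMem (hC : H.MComp M C) (hX : X ∈ C) : X ∉ M :=
  (Finset.mem_sdiff.1 (hC.2.1 hX)).2

lemma MComp.mem_of_madj (hC : H.MComp M C) (hX : X ∈ C) (h : H.MAdj M X Y) : Y ∈ C := by
  have ⟨e, he, _, hYe, _, hYM⟩ := h
  have hY : {Y} ⊆ H.nodes \ M :=
    Finset.singleton_subset_iff.2 (Finset.mem_sdiff.2 ⟨H.edge_sub e he hYe, hYM⟩)
  have hCY : C ∪ {Y} = C := hC.2.2.2 _ Finset.subset_union_left (Finset.union_subset hC.2.1 hY)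
    (hC.2.2.1.union MConn.singleton hX (Finset.mem_singleton_self Y) (.single h))
  rw [← hCY]
  exact Finset.mem_union_right C (Finset.mem_singleton_self Y)

lemma MComp.mem_of_mpath (hC : H.MComp M C) (hX : X ∈ C) (h : H.MPath M X Y) : Y ∈ C := by
  induction h with
  | refl => exact hX
  | tail _ hZY hZ => exact hC.mem_of_madj hZ hZY

lemma MComp.eq_of_mem (hC : H.MComp M C) (hD : H.MComp M D) (hXC : X ∈ C) (hXD : X ∈ D) :
    C = D := by
  have hsub := Finset.union_subset hC.2.1 hD.2.1
  have hconn := hC.2.2.1.union hD.2.2.1 hXC hXD .refl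
  exact (hC.2.2.2 _ Finset.subset_union_left hsub hconn).symm.trans
    (hD.2.2.2 _ Finset.subset_union_right hsub hconn)

lemma exists_mcomp (hX : X ∈ H.nodes) (hXM : X ∉ M) : ∃ C, H.MComp M C ∧ X ∈ C := by
  classical
  have hXC : X ∈ H.nodes.filter (H.MPath M X) := Finset.mem_filter.2 ⟨hX, .refl⟩
  refine ⟨H.nodes.filter (H.MPath M X), ⟨⟨X, hXC⟩, ?_, ?_, ?_⟩, hXC⟩
  · intro Z hZ
    obtain ⟨hZ, hXZ⟩ := Finset.mem_filter.1 hZ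
    exact Finset.mem_sdiff.2 ⟨hZ, hXZ.notMem hXM⟩
  · intro Y hY Z hZ
    exact (Finset.mem_filter.1 hY).2.symm.trans (Finset.mem_filter.1 hZ).2
  · intro C hsub hC hconn
    refine Finset.Subset.antisymm (fun Z hZ => ?_) hsub
    exact Finset.mem_filter.2 ⟨(Finset.mem_sdiff.1 (hC hZ)).1, hconn X (hsub hXC) Z hZ⟩

lemma MComp.of_disjoint (hD : H.MComp M' D) (hM : M' ⊆ M) (hDM : Disjoint D M) :
    H.MComp M D := by
  refine ⟨hD.1, Finset.subset_sdiff.2 ⟨(Finset.subset_sdiff.1 hD.2.1).1, hDM⟩, ?_, ?_⟩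
  · intro X hX Y hY
    have hpath : ∀ Y, H.MPath M' X Y → H.MPath M X Y := by
      intro Y h
      induction h with
      | refl => exact .refl
      | tail hXZ hZY ih =>
        have hZ := hD.mem_of_mpath hX hXZ
        exact ih.tail (hZY.of_notMem (Finset.disjoint_left.1 hDM hZ)
          (Finset.disjoint_left.1 hDM (hD.mem_of_madj hZ hZY)))
    exact hpath Y (hD.2.2.1 X hX Y hY)
  · intro C hsub hC hconn
    exact hD.2.2.2 C hsub (hC.trans (Finset.sdiff_subset_sdiff le_rfl hM)) (hconn.anti hM)

lemma MComp.disjoint_of_ne (hD : H.MComp M' D) (hD₀ : H.MComp M' D₀) (hMD₀ : M \ M' ⊆ D₀)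
    (hne : D ≠ D₀) : Disjoint D M :=
  Finset.disjoint_left.2 fun _ hZD hZM =>
    hne (hD.eq_of_mem hD₀ hZD (hMD₀ (Finset.mem_sdiff.2 ⟨hZM, hD.notMem hZD⟩)))

lemma MComp.subset_or_mcomp (hC : H.MComp M C) (hM : M' ⊆ M) (hD₀ : H.MComp M' D₀)
    (hMD₀ : M \ M' ⊆ D₀) : C ⊆ D₀ ∨ H.MComp M' C := by
  obtain ⟨Y, hY⟩ := hC.1
  obtain ⟨D, hD, hYD⟩ := exists_mcomp (hC.mem_nodes hY) fun h => hC.notMem hY (hM h)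
  have hCD : C ⊆ D := fun Z hZ => hD.mem_of_mpath hYD ((hC.2.2.1 Y hY Z hZ).anti hM)
  by_cases hne : D = D₀
  · exact .inl (hne ▸ hCD)
  · have hDC : D = C := (hD.of_disjoint hM (hD.disjoint_of_ne hD₀ hMD₀ hne)).eq_of_mem hC hYD hY
    exact .inr (hDC ▸ hD)

lemma exists_madj_of_mem_Fr (hCM : Disjoint C M) (hX : X ∈ H.Fr C) (hXM : X ∉ M) :
    ∃ Z ∈ C, H.MAdj M Z X := by
  obtain ⟨e, he, hXe, Z, hZ⟩ := mem_Fr.1 hX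
  obtain ⟨hZe, hZC⟩ := Finset.mem_inter.1 hZ
  exact ⟨Z, hZC, e, he, hZe, hXe, Finset.disjoint_left.1 hCM hZC, hXM⟩

section Bridge

variable {Mp Cp : Finset α} (hCp : H.MComp Mp Cp) (hM : M ⊆ H.Fr Cp) (hM' : M' ⊆ M)
  (hD₀ : H.MComp M' D₀) (hMD₀ : M \ M' ⊆ D₀) (hC : H.MComp M' C) (hne : C ≠ D₀)
include hCp hM hM' hD₀ hMD₀ hC hne

/-- One backward step along an `[Mp ∩ M']`-path ending in `C`. -/
lemma mem_or_exists_mpath_of_madj {Z Y : α} (hZY : H.MAdj (Mp ∩ M') Z Y) (hY : Y ∈ C) :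
    Z ∈ C ∨ ∃ X ∈ Cp, ∃ Y ∈ C, H.MPath (Mp ∩ M) X Y := by
  have hCM := hC.disjoint_of_ne hD₀ hMD₀ hne
  have hYM : Y ∉ M := Finset.disjoint_left.1 hCM hY
  by_cases hZM : Z ∈ M
  · by_cases hZMp : Z ∈ Mp
    · have hZM' : Z ∉ M' := fun h => hZY.left_notMem (Finset.mem_inter.2 ⟨hZMp, h⟩)
      have hZD₀ : Z ∈ D₀ := hMD₀ (Finset.mem_sdiff.2 ⟨hZM, hZM'⟩)
      have hYD₀ := hD₀.mem_of_madj hZD₀ (hZY.of_notMem hZM' (hC.notMem hY))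
      exact absurd (hC.eq_of_mem hD₀ hY hYD₀) hne
    · obtain ⟨X, hX, hXZ⟩ := exists_madj_of_mem_Fr (Finset.subset_sdiff.1 hCp.2.1).2 (hM hZM) hZMp
      have hZMpM : Z ∉ Mp ∩ M := fun h => hZMp (Finset.mem_inter.1 h).1
      have hYMpM : Y ∉ Mp ∩ M := fun h => hYM (Finset.mem_inter.1 h).2
      exact .inr ⟨X, hX, Y, hY, .tail (.single (hXZ.anti Finset.inter_subset_left))
        (hZY.of_notMem hZMpM hYMpM)⟩
  · exact .inl ((hC.of_disjoint hM' hCM).mem_of_madj hY (hZY.of_notMem hZM hYM).symm)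

lemma MConn.union_of_ne (hconn : H.MConn (Mp ∩ M') (Cp ∪ C)) : H.MConn (Mp ∩ M) (Cp ∪ C) := by
  suffices ∃ X ∈ Cp, ∃ Y ∈ C, H.MPath (Mp ∩ M) X Y by
    obtain ⟨X, hX, Y, hY, hXY⟩ := this
    exact (hCp.2.2.1.anti Finset.inter_subset_left).union
      ((hC.of_disjoint hM' (hC.disjoint_of_ne hD₀ hMD₀ hne)).2.2.1.anti Finset.inter_subset_right)
      hX hY hXY
  obtain ⟨X, hX⟩ := hCp.1
  obtain ⟨Y, hY⟩ := hC.1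
  have back : ∀ Z, H.MPath (Mp ∩ M') Z Y → Z ∈ C ∨ ∃ X ∈ Cp, ∃ Y ∈ C, H.MPath (Mp ∩ M) X Y := by
    intro Z hZ
    induction hZ using Relation.ReflTransGen.head_induction_on with
    | refl => exact .inl hY
    | head hZW _ ih =>
      rcases ih with hW | h
      · exact mem_or_exists_mpath_of_madj hCp hM hM' hD₀ hMD₀ hC hne hZW hW
      · exact .inr h
  rcases back X (hconn X (Finset.mem_union_left _ hX) Y (Finset.mem_union_right _ hY)) with hXC | h
  · exact ⟨X, hX, X, hXC, .refl⟩
  · exact h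

end Bridge

end FinHypergraph

theorem options_transfer_general {α : Type} [DecidableEq α] (H1 : FinHypergraph α)
    (Mp Cp Mr Cr : Finset α)
    (hCp : H1.MComp Mp Cp) (hMr : Mr ⊆ H1.Fr Cp)
    (ED Mr' Cr' : Finset α)
    (hMr' : Mr' = Mr \ ED)
    (hCr' : H1.MComp Mr' Cr') (hsub : Cr ∪ ED ⊆ Cr') :
    (∀ C : Finset α, H1.MComp Mr C → H1.MConn (Mp ∩ Mr) (Cp ∪ C) →
        C ⊆ Cr' ∨ (H1.MComp Mr' C ∧ H1.MConn (Mp ∩ Mr') (Cp ∪ C))) ∧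
    (∀ C' : Finset α, H1.MComp Mr' C' → H1.MConn (Mp ∩ Mr') (Cp ∪ C') → C' ≠ Cr' →
        H1.MComp Mr C' ∧ H1.MConn (Mp ∩ Mr) (Cp ∪ C')) := by
  subst hMr'
  have hMr'Mr : Mr \ ED ⊆ Mr := Finset.sdiff_subset
  have hMrCr' : Mr \ (Mr \ ED) ⊆ Cr' := by
    rw [sdiff_sdiff_right_self]
    exact Finset.inter_subset_right.trans (Finset.subset_union_right.trans hsub)
  refine ⟨fun C hC hconn => ?_, fun C' hC' hconn hne => ?_⟩
  · exact (hC.subset_or_mcomp hMr'Mr hCr' hMrCr').imp_right fun hC' =>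
      ⟨hC', hconn.anti (Finset.inter_subset_inter_left hMr'Mr)⟩
  · exact ⟨hC'.of_disjoint hMr'Mr (hC'.disjoint_of_ne hCr' hMrCr' hne),
      hconn.union_of_ne hCp hMr hMr'Mr hCr' hMrCr' hC' hne⟩

/-- Lemma, parts (2) and (3): with `ED = (M_r ∩ Fr(C_r)) \ M_s`,
`M_r' = M_r \ ED` and `C_r'` the `[M_r']`-component containing `C_r ∪ ED`:
(a) every `[M_r]`-component `C` with `C_p ∪ C` being `[M_p ∩ M_r]`-connected either satisfies
`C ⊆ C_r'` or is an `[M_r']`-component with `C_p ∪ C` being `[M_p ∩ M_r']`-connected;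
(b) every `[M_r']`-component `C' ≠ C_r'` with `C_p ∪ C'` being `[M_p ∩ M_r']`-connected is an
`[M_r]`-component with `C_p ∪ C'` being `[M_p ∩ M_r]`-connected. -/
theorem options_transfer {α : Type} [DecidableEq α] (H1 : FinHypergraph α)
    (Mp Cp Mr Cr Ms : Finset α)
    (hCp : H1.MComp Mp Cp) (hMr : Mr ⊆ H1.Fr Cp)
    (hCr : H1.MComp Mr Cr) (hc : H1.MConn (Mp ∩ Mr) (Cp ∪ Cr))
    (hMs : Ms ⊆ H1.Fr Cr)
    (ED Mr' Cr' : Finset α)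
    (hED : ED = (Mr ∩ H1.Fr Cr) \ Ms) (hMr' : Mr' = Mr \ ED)
    (hCr' : H1.MComp Mr' Cr') (hsub : Cr ∪ ED ⊆ Cr') :
    (∀ C : Finset α, H1.MComp Mr C → H1.MConn (Mp ∩ Mr) (Cp ∪ C) →
        C ⊆ Cr' ∨ (H1.MComp Mr' C ∧ H1.MConn (Mp ∩ Mr') (Cp ∪ C))) ∧
    (∀ C' : Finset α, H1.MComp Mr' C' → H1.MConn (Mp ∩ Mr') (Cp ∪ C') → C' ≠ Cr' →
        H1.MComp Mr C' ∧ H1.MConn (Mp ∩ Mr) (Cp ∪ C')) :=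
  options_transfer_general H1 Mp Cp Mr Cr hCp hMr ED Mr' Cr' hMr' hCr' hsub
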